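/- arXiv:2603.08554 — 2 statements merged into one kernel-verified Lean document; each statement's English description precedes it below -/
import Mathlib

section
/- With the same notation and hypotheses as in the previous statement, for j,k ∈ {1,2} one has conj(aⱼ₁)·aₖ₁ + conj(aⱼ₂)·aₖ₂ = δⱼₖ·α₀²·λⱼ'. In particular the 2×2 matrix (aⱼₖ) has orthogonal rows with squared row norms α₀²λⱼ'. -/
/-!
Write `A = ‖φ₁‖²`, `B = ‖φ₂‖²`, `C = |⟨φ₁, φ₂⟩|²`; the Gram determinant `G = AB - C` is positive
by the strict Cauchy–Schwarz inequality. The numbers `μ = α₀²λ₁'` and `ν = α₀²λ₂'` are the roots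
of `G t² - (A + B) t + 1` (the eigenvalues of the inverse Gram matrix), so
`G (μ + ν) = A + B`, `G μ ν = 1` and `G (μ - ν) = d`, and everything follows from these.

The coefficient matrix is the real matrix `(√x₁, -√y₁; √x₂, √y₂)` times the unitary `diag (1, q)`,
where `x₁ = (μB - 1)/d`, `y₁ = (μA - 1)/d`, `x₂ = (1 - νB)/d`, `y₂ = (1 - νA)/d`. Vieta gives
`x₁ + y₁ = μ`, `x₂ + y₂ = ν` and `x₁ x₂ = y₁ y₂`. The radicands are nonnegative because each pair
has nonnegative sum (`μd`, `νd`) and nonnegative product (`Cμ²/d²`, `Cν²/d²`).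
-/

open ComplexConjugate

theorem norm_inner_lt_norm_mul_norm_of_linearIndependent {𝕜 E : Type*} [RCLike 𝕜]
    [NormedAddCommGroup E] [InnerProductSpace 𝕜 E] {x y : E}
    (h : LinearIndependent 𝕜 ![x, y]) : ‖(inner 𝕜 x y : 𝕜)‖ < ‖x‖ * ‖y‖ := by
  refine (norm_inner_le_norm x y).lt_of_ne fun heq => ?_
  have hx : x ≠ 0 := h.ne_zero 0
  rcases ((norm_inner_eq_norm_tfae 𝕜 x y).out 0 2).1 heq with hx0 | ⟨r, rfl⟩
  · exact hx hx0
  · exact (LinearIndependent.pair_iff' hx).1 h r rfl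

theorem sq_sub_sq_sq_add_four_mul_sq_pos {a b c : ℝ} (ha : 0 ≤ a) (hb : 0 ≤ b)
    (h : c ≠ 0 ∨ a ≠ b) : 0 < (a ^ 2 - b ^ 2) ^ 2 + 4 * c ^ 2 := by
  rcases h with hc | hab
  · have := sq_pos_of_ne_zero hc
    positivity
  · have : a ^ 2 - b ^ 2 ≠ 0 := sub_ne_zero.2 fun h => hab ((sq_eq_sq₀ ha hb).1 h)
    have := sq_pos_of_ne_zero this
    positivity

theorem nonneg_and_nonneg_of_mul_nonneg_of_add_nonneg {R : Type*} [CommRing R] [LinearOrder R]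
    [IsStrictOrderedRing R] {x y : R} (hmul : 0 ≤ x * y) (hadd : 0 ≤ x + y) : 0 ≤ x ∧ 0 ≤ y := by
  constructor <;> by_contra! h <;> nlinarith

section Vieta

variable {A B C d μ ν : ℝ}

theorem vieta_of_quadratic_formula (hG : A * B - C ≠ 0) (hd : d ^ 2 = (A - B) ^ 2 + 4 * C)
    (hμ : μ = (A + B + d) / (2 * (A * B - C))) (hν : ν = (A + B - d) / (2 * (A * B - C))) :
    (A * B - C) * (μ + ν) = A + B ∧ (A * B - C) * (μ * ν) = 1 ∧ (A * B - C) * (μ - ν) = d := by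
  subst hμ hν
  refine ⟨?_, ?_, ?_⟩ <;> field_simp
  · ring
  · linear_combination -hd
  · ring

theorem nonneg_of_vieta (hG : 0 < A * B - C) (hAB : 0 ≤ A + B)
    (hsum : (A * B - C) * (μ + ν) = A + B) (hprod : (A * B - C) * (μ * ν) = 1) :
    0 ≤ μ ∧ 0 ≤ ν :=
  nonneg_and_nonneg_of_mul_nonneg_of_add_nonneg
    (nonneg_of_mul_nonneg_right (hprod ▸ zero_le_one) hG)
    (nonneg_of_mul_nonneg_right (hsum ▸ hAB) hG)

theorem radicands_of_larger_root (hC : 0 ≤ C) (hd : 0 < d) (hμ : 0 ≤ μ)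
    (hsum : (A * B - C) * (μ + ν) = A + B) (hprod : (A * B - C) * (μ * ν) = 1)
    (hdiff : (A * B - C) * (μ - ν) = d) :
    0 ≤ (-1 + μ * B) / d ∧ 0 ≤ (-1 + μ * A) / d ∧ (-1 + μ * B) / d + (-1 + μ * A) / d = μ := by
  have hadd : (-1 + μ * B) + (-1 + μ * A) = μ * d := by
    linear_combination -μ * hsum + 2 * hprod + μ * hdiff
  have hmul : (-1 + μ * B) * (-1 + μ * A) = C * μ ^ 2 := by
    linear_combination μ * hsum - hprod
  obtain ⟨hx, hy⟩ := nonneg_and_nonneg_of_mul_nonneg_of_add_nonneg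
    (by rw [hmul]; positivity) (by rw [hadd]; positivity)
  refine ⟨div_nonneg hx hd.le, div_nonneg hy hd.le, ?_⟩
  rw [← add_div, hadd, mul_div_cancel_right₀ _ hd.ne']

theorem radicands_of_smaller_root (hC : 0 ≤ C) (hd : 0 < d) (hν : 0 ≤ ν)
    (hsum : (A * B - C) * (μ + ν) = A + B) (hprod : (A * B - C) * (μ * ν) = 1)
    (hdiff : (A * B - C) * (μ - ν) = d) :
    0 ≤ (1 - ν * B) / d ∧ 0 ≤ (1 - ν * A) / d ∧ (1 - ν * B) / d + (1 - ν * A) / d = ν := by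
  have hadd : (1 - ν * B) + (1 - ν * A) = ν * d := by
    linear_combination ν * hsum - 2 * hprod + ν * hdiff
  have hmul : (1 - ν * B) * (1 - ν * A) = C * ν ^ 2 := by
    linear_combination ν * hsum - hprod
  obtain ⟨hx, hy⟩ := nonneg_and_nonneg_of_mul_nonneg_of_add_nonneg
    (by rw [hmul]; positivity) (by rw [hadd]; positivity)
  refine ⟨div_nonneg hx hd.le, div_nonneg hy hd.le, ?_⟩
  rw [← add_div, hadd, mul_div_cancel_right₀ _ hd.ne']

theorem radicands_cross_mul_eq (hG : A * B - C ≠ 0)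
    (hsum : (A * B - C) * (μ + ν) = A + B) (hprod : (A * B - C) * (μ * ν) = 1) :
    (-1 + μ * B) / d * ((1 - ν * B) / d) = (-1 + μ * A) / d * ((1 - ν * A) / d) := by
  rw [div_mul_div_comm, div_mul_div_comm]
  congr 1
  refine mul_left_cancel₀ hG ?_
  linear_combination (B - A) * hsum - (B ^ 2 - A ^ 2) * hprod

end Vieta

noncomputable def phase (z : ℂ) : ℂ := if z = 0 then 1 else z / ‖z‖

theorem conj_phase_mul_phase (z : ℂ) : conj (phase z) * phase z = 1 := by
  rw [Complex.conj_mul', phase]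
  split_ifs with h <;> simp [h]

theorem conj_ofReal_mul_add_conj_phase_mul {q : ℂ} (hq : conj q * q = 1) (r s t u : ℝ) :
    conj (r : ℂ) * t + conj (q * s) * (q * u) = ((r * t + s * u : ℝ) : ℂ) := by
  rw [map_mul, mul_mul_mul_comm, hq, Complex.conj_ofReal, Complex.conj_ofReal]
  push_cast
  ring

theorem eigenbasis_coefficients_rows_orthogonal_general
    {E : Type*} [NormedAddCommGroup E] [InnerProductSpace ℂ E]
    (φ₁ φ₂ : E) (hli : LinearIndependent ℂ ![φ₁, φ₂])
    (hnd : (inner ℂ φ₁ φ₂ : ℂ) ≠ 0 ∨ ‖φ₁‖ ≠ ‖φ₂‖)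
    (α₀ : ℝ) (hα₀ : α₀ ≠ 0)
    (d : ℝ)
    (hd : d = Real.sqrt ((‖φ₁‖ ^ 2 - ‖φ₂‖ ^ 2) ^ 2 + 4 * ‖(inner ℂ φ₁ φ₂ : ℂ)‖ ^ 2))
    (l₁' l₂' : ℝ)
    (hl₁ : l₁' = (‖φ₁‖ ^ 2 + ‖φ₂‖ ^ 2 + d) /
        (2 * α₀ ^ 2 * (‖φ₁‖ ^ 2 * ‖φ₂‖ ^ 2 - ‖(inner ℂ φ₁ φ₂ : ℂ)‖ ^ 2)))
    (hl₂ : l₂' = (‖φ₁‖ ^ 2 + ‖φ₂‖ ^ 2 - d) /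
        (2 * α₀ ^ 2 * (‖φ₁‖ ^ 2 * ‖φ₂‖ ^ 2 - ‖(inner ℂ φ₁ φ₂ : ℂ)‖ ^ 2)))
    (q : ℂ)
    (hq : q = if (inner ℂ φ₁ φ₂ : ℂ) = 0 then 1
      else (inner ℂ φ₁ φ₂ : ℂ) / ‖(inner ℂ φ₁ φ₂ : ℂ)‖)
    (a₁₁ a₁₂ a₂₁ a₂₂ : ℂ)
    (ha₁₁ : a₁₁ = (Real.sqrt ((-1 + α₀ ^ 2 * ‖φ₂‖ ^ 2 * l₁') / d) : ℝ))
    (ha₁₂ : a₁₂ = -q * (Real.sqrt ((-1 + α₀ ^ 2 * ‖φ₁‖ ^ 2 * l₁') / d) : ℝ))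
    (ha₂₁ : a₂₁ = (Real.sqrt ((1 - α₀ ^ 2 * ‖φ₂‖ ^ 2 * l₂') / d) : ℝ))
    (ha₂₂ : a₂₂ = q * (Real.sqrt ((1 - α₀ ^ 2 * ‖φ₁‖ ^ 2 * l₂') / d) : ℝ)) :
    (starRingEnd ℂ) a₁₁ * a₁₁ + (starRingEnd ℂ) a₁₂ * a₁₂ = ((α₀ ^ 2 * l₁' : ℝ) : ℂ) ∧
    (starRingEnd ℂ) a₂₁ * a₂₁ + (starRingEnd ℂ) a₂₂ * a₂₂ = ((α₀ ^ 2 * l₂' : ℝ) : ℂ) ∧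
    (starRingEnd ℂ) a₁₁ * a₂₁ + (starRingEnd ℂ) a₁₂ * a₂₂ = 0 ∧
    (starRingEnd ℂ) a₂₁ * a₁₁ + (starRingEnd ℂ) a₂₂ * a₁₂ = 0 := by
  have hG : 0 < ‖φ₁‖ ^ 2 * ‖φ₂‖ ^ 2 - ‖(inner ℂ φ₁ φ₂ : ℂ)‖ ^ 2 := by
    rw [sub_pos, ← mul_pow]
    exact pow_lt_pow_left₀ (norm_inner_lt_norm_mul_norm_of_linearIndependent hli)
      (norm_nonneg _) two_ne_zero
  have hdiscr := sq_sub_sq_sq_add_four_mul_sq_pos (norm_nonneg φ₁) (norm_nonneg φ₂)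
    (hnd.imp_left norm_ne_zero_iff.2)
  have hd0 : 0 < d := hd ▸ Real.sqrt_pos.2 hdiscr
  have hd2 : d ^ 2 = _ := hd ▸ Real.sq_sqrt hdiscr.le
  obtain ⟨hsum, hprod, hdiff⟩ := vieta_of_quadratic_formula (μ := α₀ ^ 2 * l₁')
    (ν := α₀ ^ 2 * l₂') hG.ne' hd2 (by rw [hl₁]; field_simp) (by rw [hl₂]; field_simp)
  obtain ⟨hμ, hν⟩ := nonneg_of_vieta hG (by positivity) hsum hprod
  obtain ⟨hx₁, hy₁, hrow₁⟩ := radicands_of_larger_root (by positivity) hd0 hμ hsum hprod hdiff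
  obtain ⟨hx₂, hy₂, hrow₂⟩ := radicands_of_smaller_root (by positivity) hd0 hν hsum hprod hdiff
  have hcross := radicands_cross_mul_eq (d := d) hG.ne' hsum hprod
  have hq1 : conj q * q = 1 := hq ▸ conj_phase_mul_phase _
  simp only [mul_right_comm (α₀ ^ 2) _ l₁', mul_right_comm (α₀ ^ 2) _ l₂'] at ha₁₁ ha₁₂ ha₂₁ ha₂₂
  have ha₁₂' : a₁₂ = q * ((-√((-1 + α₀ ^ 2 * l₁' * ‖φ₁‖ ^ 2) / d) : ℝ) : ℂ) := by
    rw [ha₁₂]; push_cast; ring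
  subst ha₁₁ ha₁₂' ha₂₁ ha₂₂
  simp only [conj_ofReal_mul_add_conj_phase_mul hq1, Complex.ofReal_inj, Complex.ofReal_eq_zero]
  refine ⟨?_, ?_, ?_, ?_⟩
  · rw [neg_mul_neg, Real.mul_self_sqrt hx₁, Real.mul_self_sqrt hy₁, hrow₁]
  · rw [Real.mul_self_sqrt hx₂, Real.mul_self_sqrt hy₂, hrow₂]
  · rw [neg_mul, ← Real.sqrt_mul hx₁, ← Real.sqrt_mul hy₁, hcross, add_neg_cancel]
  · rw [mul_neg, ← Real.sqrt_mul hx₂, ← Real.sqrt_mul hy₂, mul_comm _ ((-1 + _) / d),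
      mul_comm _ ((-1 + _) / d), hcross, add_neg_cancel]

theorem eigenbasis_coefficients_rows_orthogonal
    {E : Type*} [NormedAddCommGroup E] [InnerProductSpace ℂ E]
    (φ₁ φ₂ : E) (hli : LinearIndependent ℂ ![φ₁, φ₂])
    (hnd : (inner ℂ φ₁ φ₂ : ℂ) ≠ 0 ∨ ‖φ₁‖ ≠ ‖φ₂‖)
    (α₀ : ℝ) (hα₀ : α₀ ≠ 0)
    (d : ℝ)
    (hd : d = Real.sqrt ((‖φ₁‖ ^ 2 - ‖φ₂‖ ^ 2) ^ 2 + 4 * ‖(inner ℂ φ₁ φ₂ : ℂ)‖ ^ 2))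
    (l₁' l₂' : ℝ)
    (hl₁ : l₁' = (‖φ₁‖ ^ 2 + ‖φ₂‖ ^ 2 + d) /
        (2 * α₀ ^ 2 * (‖φ₁‖ ^ 2 * ‖φ₂‖ ^ 2 - ‖(inner ℂ φ₁ φ₂ : ℂ)‖ ^ 2)))
    (hl₂ : l₂' = (‖φ₁‖ ^ 2 + ‖φ₂‖ ^ 2 - d) /
        (2 * α₀ ^ 2 * (‖φ₁‖ ^ 2 * ‖φ₂‖ ^ 2 - ‖(inner ℂ φ₁ φ₂ : ℂ)‖ ^ 2)))
    (hle : ‖φ₁‖ ≤ ‖φ₂‖)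
    (q : ℂ)
    (hq : q = if (inner ℂ φ₁ φ₂ : ℂ) = 0 then 1
      else (inner ℂ φ₁ φ₂ : ℂ) / ‖(inner ℂ φ₁ φ₂ : ℂ)‖)
    (a₁₁ a₁₂ a₂₁ a₂₂ : ℂ)
    (ha₁₁ : a₁₁ = (Real.sqrt ((-1 + α₀ ^ 2 * ‖φ₂‖ ^ 2 * l₁') / d) : ℝ))
    (ha₁₂ : a₁₂ = -q * (Real.sqrt ((-1 + α₀ ^ 2 * ‖φ₁‖ ^ 2 * l₁') / d) : ℝ))
    (ha₂₁ : a₂₁ = (Real.sqrt ((1 - α₀ ^ 2 * ‖φ₂‖ ^ 2 * l₂') / d) : ℝ))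
    (ha₂₂ : a₂₂ = q * (Real.sqrt ((1 - α₀ ^ 2 * ‖φ₁‖ ^ 2 * l₂') / d) : ℝ)) :
    (starRingEnd ℂ) a₁₁ * a₁₁ + (starRingEnd ℂ) a₁₂ * a₁₂ = ((α₀ ^ 2 * l₁' : ℝ) : ℂ) ∧
    (starRingEnd ℂ) a₂₁ * a₂₁ + (starRingEnd ℂ) a₂₂ * a₂₂ = ((α₀ ^ 2 * l₂' : ℝ) : ℂ) ∧
    (starRingEnd ℂ) a₁₁ * a₂₁ + (starRingEnd ℂ) a₁₂ * a₂₂ = 0 ∧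
    (starRingEnd ℂ) a₂₁ * a₁₁ + (starRingEnd ℂ) a₂₂ * a₁₂ = 0 :=
  eigenbasis_coefficients_rows_orthogonal_general φ₁ φ₂ hli hnd α₀ hα₀ d hd l₁' l₂' hl₁ hl₂ q hq a₁₁
    a₁₂ a₂₁ a₂₂ ha₁₁ ha₁₂ ha₂₁ ha₂₂
end

section
/- Let H₀ be self-adjoint on a Hilbert space H, u₁, u₂ ∈ H with u₁ ⊥ u₂, V = ⟨·,u₁⟩u₁ + ⟨·,u₂⟩u₂, H_α = H₀ + αV, and B(α,z) = I + ατR₀(z)τ* on ℂ² with τv = (⟨v,u₁⟩,⟨v,u₂⟩). Then for v, w ∈ H and Im z ≠ 0, ⟨R_α(z)v,w⟩ = ⟨R₀(z)v,w⟩ - (α/det B(α,z))·Σ_{j,k=1}^{2} b̃ⱼₖ(α,z)⟨R₀(z)v,uⱼ⟩⟨R₀(z)uₖ,w⟩, where b̃ⱼₖ(α,z) are the entries of the cofactor (adjugate-transpose) matrix of B(α,z). -/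
/-!
The second resolvent identity gives `R_α v = R₀ v - α ∑ₖ cₖ R₀ uₖ` with `cₖ = ⟪uₖ, R_α v⟫`;
pairing it with `u_j` shows that `c` solves `B c = (⟪u_j, R₀ v⟫)_j`. The matrix `B` is
invertible: if `B c = 0`, then `R₀ (∑ₖ cₖ uₖ)` is annihilated by the invertible `H_α - z`,
hence `c = B c - α τ R₀ τ* c = 0`. Cramer's rule `adj B * B = det B • 1` then solves for `c`.
-/

open scoped Matrix

theorem IsSelfAdjoint.isUnit_sub_smul_one {A : Type*} [CStarAlgebra A] {a : A}
    (ha : IsSelfAdjoint a) {z : ℂ} (hz : z.im ≠ 0) : IsUnit (a - z • 1) := by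
  have h : z ∉ spectrum ℂ a := fun hmem => hz (ha.im_eq_zero_of_mem_spectrum hmem)
  rw [spectrum.notMem_iff, Algebra.algebraMap_eq_smul_one] at h
  simpa only [neg_sub] using h.neg

/-- The second resolvent identity, applied to a vector. -/
theorem ContinuousLinearMap.inverse_add_apply {𝕜 E : Type*} [NormedField 𝕜]
    [NormedAddCommGroup E] [NormedSpace 𝕜 E] {A P : E →L[𝕜] E} (hA : IsUnit A)
    (hAP : IsUnit (A + P)) (v : E) :
    Ring.inverse (A + P) v =
      Ring.inverse A v - Ring.inverse A (P (Ring.inverse (A + P) v)) := by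
  have h := congrArg (fun T : E →L[𝕜] E => T v)
    (Ring.inverse_sub_inverse (iff_of_true hA hAP))
  simp only [add_sub_cancel_left, _root_.sub_apply, mul_apply_eq_comp] at h
  rw [← h, sub_sub_cancel]

section

variable {𝕜 H ι : Type*} [RCLike 𝕜] [NormedAddCommGroup H] [InnerProductSpace 𝕜 H] [Fintype ι]

theorem isSelfAdjoint_of_apply_eq_sum_inner_smul [CompleteSpace H] {u : ι → H}
    {V : H →L[𝕜] H} (hV : ∀ v, V v = ∑ j, inner 𝕜 (u j) v • u j) : IsSelfAdjoint V := by
  refine LinearMap.IsSymmetric.isSelfAdjoint fun x y => ?_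
  simp only [ContinuousLinearMap.coe_coe, hV, sum_inner, inner_sum, inner_smul_left,
    inner_smul_right, inner_conj_symm]
  exact Finset.sum_congr rfl fun j _ => mul_comm _ _

/-- The matrix of `τ T τ*`, where `τ v = (⟪u j, v⟫)ⱼ`. -/
noncomputable def innerMatrix (u : ι → H) (T : H →L[𝕜] H) : Matrix ι ι 𝕜 :=
  Matrix.of fun j k => inner 𝕜 (u j) (T (u k))

theorem innerMatrix_mulVec (u : ι → H) (T : H →L[𝕜] H) (c : ι → 𝕜) :
    innerMatrix u T *ᵥ c = fun j => inner 𝕜 (u j) (T (∑ k, c k • u k)) := by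
  funext j
  simp only [innerMatrix, Matrix.mulVec, dotProduct, Matrix.of_apply, map_sum, map_smul,
    inner_sum, inner_smul_right, mul_comm]

variable [DecidableEq ι] {u : ι → H} {V : H →L[𝕜] H}
  (hV : ∀ v, V v = ∑ j, inner 𝕜 (u j) v • u j) {A : H →L[𝕜] H} {α : 𝕜}
include hV

theorem one_add_smul_innerMatrix_mulVec (hA : IsUnit A) (hAV : IsUnit (A + α • V)) (v : H) :
    (1 + α • innerMatrix u (Ring.inverse A)) *ᵥ
        (fun k => inner 𝕜 (u k) (Ring.inverse (A + α • V) v))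
      = fun j => inner 𝕜 (u j) (Ring.inverse A v) := by
  funext j
  have h := congrArg (inner 𝕜 (u j)) (ContinuousLinearMap.inverse_add_apply hA hAV v)
  rw [_root_.smul_apply, hV, map_smul, inner_sub_right, inner_smul_right] at h
  rw [Matrix.add_mulVec, Matrix.one_mulVec, Matrix.smul_mulVec, innerMatrix_mulVec]
  simp only [Pi.add_apply, Pi.smul_apply, smul_eq_mul]
  linear_combination h

theorem add_smul_apply_inverse_sum_smul (hA : IsUnit A) (c : ι → 𝕜) :
    (A + α • V) (Ring.inverse A (∑ k, c k • u k))
      = ∑ j, ((1 + α • innerMatrix u (Ring.inverse A)) *ᵥ c) j • u j := by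
  have hAR : A (Ring.inverse A (∑ k, c k • u k)) = ∑ k, c k • u k := by
    rw [← mul_apply_eq_comp, Ring.mul_inverse_cancel A hA, one_apply_eq_self]
  rw [_root_.add_apply, _root_.smul_apply, hAR, hV, Matrix.add_mulVec, Matrix.one_mulVec,
    Matrix.smul_mulVec, innerMatrix_mulVec, Finset.smul_sum, ← Finset.sum_add_distrib]
  simp only [Pi.add_apply, Pi.smul_apply, smul_eq_mul, add_smul, mul_smul]

theorem det_one_add_smul_innerMatrix_ne_zero (hA : IsUnit A) (hAV : IsUnit (A + α • V)) :
    (1 + α • innerMatrix u (Ring.inverse A)).det ≠ 0 := by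
  rw [Ne, ← Matrix.exists_mulVec_eq_zero_iff]
  rintro ⟨c, hc, hBc⟩
  have hRc : Ring.inverse A (∑ k, c k • u k) = 0 := by
    have h := add_smul_apply_inverse_sum_smul hV (α := α) hA c
    simp only [hBc, Pi.zero_apply, zero_smul, Finset.sum_const_zero] at h
    rw [← one_apply_eq_self (F := H →L[𝕜] H) (Ring.inverse A _),
      ← Ring.inverse_mul_cancel _ hAV, mul_apply_eq_comp, h, map_zero]
  refine hc (funext fun j => ?_)
  have h := congrFun hBc j
  rw [Matrix.add_mulVec, Matrix.one_mulVec, Matrix.smul_mulVec, innerMatrix_mulVec, hRc] at h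
  simpa using h

theorem inner_inverse_add_smul_eq (hA : IsUnit A) (hAV : IsUnit (A + α • V))
    (B : Matrix ι ι 𝕜) (hB : B = 1 + α • innerMatrix u (Ring.inverse A)) (v w : H) :
    inner 𝕜 w (Ring.inverse (A + α • V) v) = inner 𝕜 w (Ring.inverse A v) - α / B.det *
      ∑ j, ∑ k, B.adjugate k j * inner 𝕜 (u j) (Ring.inverse A v)
        * inner 𝕜 w (Ring.inverse A (u k)) := by
  have hdet : B.det ≠ 0 := hB ▸ det_one_add_smul_innerMatrix_ne_zero hV hA hAV
  have hBc := one_add_smul_innerMatrix_mulVec hV hA hAV v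
  rw [← hB] at hBc
  set c := fun k => inner 𝕜 (u k) (Ring.inverse (A + α • V) v)
  set d := fun j => inner 𝕜 (u j) (Ring.inverse A v)
  have hcramer : ∀ k, c k = (B.det)⁻¹ * ∑ j, B.adjugate k j * d j := by
    have h : B.adjugate *ᵥ d = B.det • c := by
      rw [← hBc, Matrix.mulVec_mulVec, Matrix.adjugate_mul, Matrix.smul_mulVec,
        Matrix.one_mulVec]
    intro k
    rw [← dotProduct, ← Matrix.mulVec, h, Pi.smul_apply, smul_eq_mul,
      inv_mul_cancel_left₀ hdet]
  calc inner 𝕜 w (Ring.inverse (A + α • V) v)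
      = inner 𝕜 w (Ring.inverse A v)
          - α * ∑ k, c k * inner 𝕜 w (Ring.inverse A (u k)) := by
        rw [ContinuousLinearMap.inverse_add_apply hA hAV, _root_.smul_apply, hV, map_smul,
          map_sum, inner_sub_right, inner_smul_right, inner_sum]
        simp only [map_smul, inner_smul_right, c]
    _ = _ := by
        rw [Finset.sum_comm, div_eq_mul_inv, mul_assoc]
        simp only [hcramer, Finset.mul_sum, Finset.sum_mul]
        exact congrArg _ (Finset.sum_congr rfl fun k _ => Finset.sum_congr rfl fun j _ => by ring)

end

theorem rank_two_resolvent_formula_general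
    {H : Type*} [NormedAddCommGroup H] [InnerProductSpace ℂ H] [CompleteSpace H]
    (u : Fin 2 → H)
    (V : H →L[ℂ] H)
    (hV : ∀ v : H, V v = ∑ j : Fin 2, (inner ℂ (u j) v : ℂ) • u j)
    (H₀ : H →L[ℂ] H) (hH₀ : IsSelfAdjoint H₀)
    (α : ℝ) (z : ℂ) (hz : z.im ≠ 0)
    (R₀ Rα : H →L[ℂ] H)
    (hR₀ : R₀ = Ring.inverse (H₀ - z • (1 : H →L[ℂ] H)))
    (hRα : Rα = Ring.inverse (H₀ + (α : ℂ) • V - z • (1 : H →L[ℂ] H)))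
    (B : Matrix (Fin 2) (Fin 2) ℂ)
    (hB : B = 1 + (α : ℂ) • Matrix.of (fun j k => (inner ℂ (u j) (R₀ (u k)) : ℂ)))
    (v w : H) :
    (inner ℂ w (Rα v) : ℂ) =
      (inner ℂ w (R₀ v) : ℂ) -
        ((α : ℂ) / B.det) *
          ∑ j : Fin 2, ∑ k : Fin 2,
            B.adjugate k j * (inner ℂ (u j) (R₀ v) : ℂ) * (inner ℂ w (R₀ (u k)) : ℂ) := by
  have hα : IsSelfAdjoint (α : ℂ) := Complex.conj_ofReal α
  have hHα : IsSelfAdjoint (H₀ + (α : ℂ) • V) :=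
    hH₀.add (hα.smul (isSelfAdjoint_of_apply_eq_sum_inner_smul hV))
  have hAV : IsUnit (H₀ - z • 1 + (α : ℂ) • V) := by
    rw [sub_add_eq_add_sub]
    exact hHα.isUnit_sub_smul_one hz
  rw [hRα, ← sub_add_eq_add_sub]
  subst hR₀
  exact inner_inverse_add_smul_eq hV (hH₀.isUnit_sub_smul_one hz) hAV B hB v w

/-- Lemma 4.1: the matrix elements of the resolvent of the rank-two perturbation
`H_α = H₀ + αV` are expressed through free-resolvent matrix elements via the cofactor
matrix of `B(α,z)`.  (Here `⟨·,·⟩` is conjugate-linear in the second variable, so the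
paper's `⟨x, y⟩` is `inner y x` in Mathlib's convention.) -/
theorem rank_two_resolvent_formula
    {H : Type*} [NormedAddCommGroup H] [InnerProductSpace ℂ H] [CompleteSpace H]
    (u : Fin 2 → H) (hu : (inner ℂ (u 0) (u 1) : ℂ) = 0)
    (V : H →L[ℂ] H)
    (hV : ∀ v : H, V v = ∑ j : Fin 2, (inner ℂ (u j) v : ℂ) • u j)
    (H₀ : H →L[ℂ] H) (hH₀ : IsSelfAdjoint H₀)
    (α : ℝ) (z : ℂ) (hz : z.im ≠ 0)
    (R₀ Rα : H →L[ℂ] H)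
    (hR₀ : R₀ = Ring.inverse (H₀ - z • (1 : H →L[ℂ] H)))
    (hRα : Rα = Ring.inverse (H₀ + (α : ℂ) • V - z • (1 : H →L[ℂ] H)))
    (B : Matrix (Fin 2) (Fin 2) ℂ)
    (hB : B = 1 + (α : ℂ) • Matrix.of (fun j k => (inner ℂ (u j) (R₀ (u k)) : ℂ)))
    (v w : H) :
    (inner ℂ w (Rα v) : ℂ) =
      (inner ℂ w (R₀ v) : ℂ) -
        ((α : ℂ) / B.det) *
          ∑ j : Fin 2, ∑ k : Fin 2,
            B.adjugate k j * (inner ℂ (u j) (R₀ v) : ℂ) * (inner ℂ w (R₀ (u k)) : ℂ) :=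
  rank_two_resolvent_formula_general u V hV H₀ hH₀ α z hz R₀ Rα hR₀ hRα B hB v w
end
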